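/- arXiv:math/0010281 — 6 statements merged into one kernel-verified Lean document; each statement's English description precedes it below -/
import Mathlib

section
/- Every nonzero 2×2 integer matrix X with X² = 0 and whose entries have gcd 1 is conjugate over GL₂(ℤ) to the matrix E = [[0, -1], [0, 0]]. -/
/-!
Comparing entries of `X * X = 0` forces `X = !![a, b; c, -a]` with `a² + bc = 0`. A prime dividing
`b` and `c` would divide `a`, so `b` and `-c` are coprime with square product `a²`; hence
`b = εu²`, `-c = εv²`, `a = εuv` for a unit `ε` and coprime `u, v`. Then `(u, -v)` spans the kernel
of `X`, and completing it by Bézout (`su + tv = 1`) to a basis with `X w = -(u, -v)` gives `T`.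
-/

theorem Matrix.fin_two_mul_self_eq_zero {R : Type*} [CommRing R] [IsDomain R] {a b c d : R}
    (h : !![a, b; c, d] * !![a, b; c, d] = 0) : d = -a ∧ a * a + b * c = 0 := by
  rw [Matrix.mul_fin_two, ← Matrix.ext_iff] at h
  have h00 : a * a + b * c = 0 := by simpa using h 0 0
  have h01 : b * (a + d) = 0 := by linear_combination (by simpa using h 0 1 : a * b + b * d = 0)
  have h10 : c * (a + d) = 0 := by linear_combination (by simpa using h 1 0 : c * a + d * c = 0)
  have h11 : c * b + d * d = 0 := by simpa using h 1 1
  refine ⟨?_, h00⟩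
  by_contra hd
  have hsum : a + d ≠ 0 := fun hsum ↦ hd (by linear_combination hsum)
  obtain rfl : b = 0 := (mul_eq_zero.mp h01).resolve_right hsum
  obtain rfl : c = 0 := (mul_eq_zero.mp h10).resolve_right hsum
  obtain rfl : a = 0 := mul_self_eq_zero.mp (by simpa using h00)
  obtain rfl : d = 0 := mul_self_eq_zero.mp (by simpa using h11)
  simp at hsum

theorem isCoprime_of_mul_self_add_mul_eq_zero {R : Type*} [CommRing R] [IsDomain R]
    [IsPrincipalIdealRing R] {a b c : R} (h : a * a + b * c = 0)
    (hprim : ∀ p, p ∣ a → p ∣ b → p ∣ c → IsUnit p) : IsCoprime b c := by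
  have hsq : a * a = -(b * c) := by linear_combination h
  refine isCoprime_of_prime_dvd ?_ fun p hp hpb hpc ↦ ?_
  · rintro ⟨rfl, rfl⟩
    obtain rfl : a = 0 := mul_self_eq_zero.mp (by simpa using hsq)
    exact not_isUnit_zero (hprim 0 dvd_rfl dvd_rfl dvd_rfl)
  · have hpa : p ∣ a :=
      hp.dvd_of_dvd_pow (n := 2) (by rw [sq, hsq]; exact (hpb.mul_right c).neg_right)
    exact hp.not_isUnit (hprim p hpa hpb hpc)

theorem Int.exists_isUnit_mul_sq_of_isCoprime_of_mul_eq_sq {a b c : ℤ} (hbc : IsCoprime b c)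
    (h : b * c = a ^ 2) :
    ∃ ε u v : ℤ,
      IsUnit ε ∧ IsCoprime u v ∧ b = ε * u ^ 2 ∧ c = ε * v ^ 2 ∧ a = ε * u * v := by
  suffices ∃ ε u v : ℤ, IsUnit ε ∧ b = ε * u ^ 2 ∧ c = ε * v ^ 2 ∧ a = ε * u * v by
    obtain ⟨ε, u, v, hε, hb, hc, ha⟩ := this
    refine ⟨ε, u, v, hε, ?_, hb, hc, ha⟩
    exact (hbc.of_isCoprime_of_dvd_left ⟨ε * u, by rw [hb]; ring⟩).of_isCoprime_of_dvd_right
      ⟨ε * v, by rw [hc]; ring⟩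
  obtain ⟨r, hr⟩ := Int.sq_of_isCoprime hbc h
  obtain ⟨ε, hε, hb⟩ : ∃ ε : ℤ, IsUnit ε ∧ b = ε * r ^ 2 := by
    rcases hr with hr | hr
    · exact ⟨1, isUnit_one, by rw [hr, one_mul]⟩
    · exact ⟨-1, isUnit_one.neg, by rw [hr]; ring⟩
  rcases eq_or_ne r 0 with rfl | hr0
  · obtain rfl : b = 0 := by simpa using hb
    obtain rfl : a = 0 := pow_eq_zero_iff two_ne_zero |>.mp (by rw [← h, zero_mul])
    exact ⟨c, 0, 1, isCoprime_zero_left.mp hbc, by ring, by ring, by ring⟩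
  · obtain ⟨m, rfl⟩ : r ∣ a :=
      (Int.pow_dvd_pow_iff two_ne_zero).mp ⟨ε * c, by rw [← h, hb]; ring⟩
    have hεc : ε * c = m ^ 2 :=
      mul_left_cancel₀ (pow_ne_zero 2 hr0) (by linear_combination h - c * hb)
    have hε2 := Int.isUnit_mul_self hε
    exact ⟨ε, r, ε * m, hε, hb, by linear_combination ε * hεc - ε * m ^ 2 * hε2 - c * hε2,
      by linear_combination -(r * m) * hε2⟩

theorem exists_GL_conj_of_isCoprime {ε u v : ℤ} (hε : IsUnit ε) (huv : IsCoprime u v) :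
    ∃ T : GL (Fin 2) ℤ, !![ε * u * v, ε * u ^ 2; -(ε * v ^ 2), -(ε * u * v)] =
      (T : Matrix (Fin 2) (Fin 2) ℤ) * !![0, -1; 0, 0] *
        ((T⁻¹ : GL (Fin 2) ℤ) : Matrix (Fin 2) (Fin 2) ℤ) := by
  obtain ⟨s, t, hst⟩ := huv
  have hε2 := Int.isUnit_mul_self hε
  have hdet : IsUnit !![u, -(ε * t); -v, -(ε * s)].det := by
    rw [Matrix.det_fin_two_of,
      show u * -(ε * s) - -(ε * t) * -v = -ε by linear_combination -ε * hst]
    exact hε.neg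
  refine ⟨.mk'' _ hdet, (Units.eq_mul_inv_iff_mul_eq _).mpr ?_⟩
  rw [Matrix.GeneralLinearGroup.val_mk'', Matrix.mul_fin_two, Matrix.mul_fin_two]
  congr 1
  ext i j
  fin_cases i <;> fin_cases j <;>
    simp only [Fin.zero_eta, Fin.mk_one, Matrix.cons_val', Matrix.cons_val_zero,
      Matrix.cons_val_one, Matrix.cons_val_fin_one, mul_zero, add_zero, mul_one, mul_neg, neg_neg]
  · ring
  · linear_combination -(u * ε ^ 2) * hst - u * hε2
  · ring
  · linear_combination v * ε ^ 2 * hst + v * hε2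

theorem stmt_6_general (X : Matrix (Fin 2) (Fin 2) ℤ) (h : X * X = 0)
    (hgcd : Int.gcd (Int.gcd (X 0 0) (X 0 1)) (Int.gcd (X 1 0) (X 1 1)) = 1) :
    ∃ T : GL (Fin 2) ℤ,
      X = (T : Matrix (Fin 2) (Fin 2) ℤ) * !![0, -1; 0, 0] * ((T⁻¹ : GL (Fin 2) ℤ) : Matrix (Fin 2) (Fin 2) ℤ) := by
  obtain ⟨a, b, c, d, rfl⟩ : ∃ a b c d, X = !![a, b; c, d] := ⟨_, _, _, _, X.eta_fin_two⟩
  obtain ⟨rfl, hsq⟩ := Matrix.fin_two_mul_self_eq_zero h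
  simp only [Fin.isValue, Matrix.of_apply, Matrix.cons_val', Matrix.cons_val_zero,
    Matrix.cons_val_fin_one, Matrix.cons_val_one, Int.gcd_neg] at hgcd
  have hprim (p : ℤ) (ha : p ∣ a) (hb : p ∣ b) (hc : p ∣ c) : IsUnit p := by
    have hp := Int.dvd_coe_gcd (Int.dvd_coe_gcd ha hb) (Int.dvd_coe_gcd hc ha)
    rw [hgcd, Nat.cast_one] at hp
    exact isUnit_of_dvd_one hp
  have hbc : IsCoprime b (-c) := (isCoprime_of_mul_self_add_mul_eq_zero hsq hprim).neg_right
  obtain ⟨ε, u, v, hε, huv, rfl, hc, rfl⟩ :=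
    Int.exists_isUnit_mul_sq_of_isCoprime_of_mul_eq_sq (a := a) hbc (by linear_combination -hsq)
  obtain rfl : c = -(ε * v ^ 2) := by linear_combination -hc
  exact exists_GL_conj_of_isCoprime hε huv

theorem stmt_6 (X : Matrix (Fin 2) (Fin 2) ℤ) (hX : X ≠ 0) (h : X * X = 0)
    (hgcd : Int.gcd (Int.gcd (X 0 0) (X 0 1)) (Int.gcd (X 1 0) (X 1 1)) = 1) :
    ∃ T : GL (Fin 2) ℤ,
      X = (T : Matrix (Fin 2) (Fin 2) ℤ) * !![0, -1; 0, 0] * ((T⁻¹ : GL (Fin 2) ℤ) : Matrix (Fin 2) (Fin 2) ℤ) :=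
  stmt_6_general X h hgcd
end

section
/- The set of nilpotent matrices in M₂(ℤ) (matrices X with X² = 0) is the disjoint union over λ ∈ ℕ of the GL₂(ℤ)-conjugacy classes of λ·E, where E = [[0,-1],[0,0]]. -/
/-!
A matrix `X ∈ M₂(ℤ)` with `X² = 0` has trace and determinant zero, so `X = !![a, b; c, -a]` with
`a² + bc = 0`. Dividing by `l = gcd(b, c)` and using that a product of coprime integers which is a
square is a square up to sign, one gets `X = ± l · (p, r)ᵀ (r, -p)` with `p, r` coprime; completing
`(p, r)` to a basis of `ℤ²` conjugates `X` to `l • E`. The ideal generated by the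
entries of a matrix is a conjugation invariant, and for `l • E` it is `(l)`, which determines
`l ∈ ℕ`.
-/

namespace Matrix

variable {l m n R : Type*} [CommRing R]

theorem det_eq_zero_of_isNilpotent [Fintype n] [DecidableEq n] [Nonempty n] [IsReduced R]
    {X : Matrix n n R} (hX : IsNilpotent X) : X.det = 0 := by
  obtain ⟨k, hk⟩ := hX
  exact IsNilpotent.eq_zero ⟨k, by rw [← det_pow, hk, det_zero]⟩

theorem exists_eq_fin_two_of_mul_self_eq_zero [IsReduced R] {X : Matrix (Fin 2) (Fin 2) R}
    (hX : X * X = 0) : ∃ a b c : R, X = !![a, b; c, -a] ∧ a * a + b * c = 0 := by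
  have hnil : IsNilpotent X := ⟨2, by rw [sq, hX]⟩
  have htr : X 0 0 + X 1 1 = 0 := by
    rw [← trace_fin_two]; exact (isNilpotent_trace_of_isNilpotent hnil).eq_zero
  have hdet : X 0 0 * X 1 1 - X 0 1 * X 1 0 = 0 := by
    rw [← det_fin_two]; exact det_eq_zero_of_isNilpotent hnil
  refine ⟨X 0 0, X 0 1, X 1 0, ?_, ?_⟩
  · rw [← eq_neg_of_add_eq_zero_right htr]; exact eta_fin_two X
  · linear_combination -hdet + X 0 0 * htr

theorem smul_upperNilpotent_sq (c : R) : (c • !![(0 : R), -1; 0, 0]) ^ 2 = 0 := by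
  ext i j; fin_cases i <;> fin_cases j <;> simp [sq]

theorem exists_conj_smul_upperNilpotent_eq (l ε p r : R) (hε : ε * ε = 1) (hpr : IsCoprime p r) :
    ∃ T : GL (Fin 2) R,
      !![l * (ε * (p * r)), -(l * (ε * (p * p))); l * (ε * (r * r)), -(l * (ε * (p * r)))] =
        (T : Matrix (Fin 2) (Fin 2) R) * (l • !![0, -1; 0, 0]) *
          ((T⁻¹ : GL (Fin 2) R) : Matrix (Fin 2) (Fin 2) R) := by
  obtain ⟨x, y, hxy⟩ := hpr
  -- `T` has columns `(p, r)` and `ε • (-y, x)`, so `det T = ε` and `T⁻¹ = !![x, y; -ε r, ε p]`.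
  refine ⟨⟨!![p, -(ε * y); r, ε * x], !![x, y; -(ε * r), ε * p], ?_, ?_⟩, ?_⟩
  all_goals ext i j; fin_cases i <;> fin_cases j <;> simp [mul_apply, Fin.sum_univ_two]
  all_goals grind

def entryIdeal (M : Matrix m n R) : Ideal R := Ideal.span (Set.range (Function.uncurry M))

theorem entry_mem_entryIdeal (M : Matrix m n R) (i : m) (j : n) : M i j ∈ entryIdeal M :=
  Ideal.subset_span ⟨(i, j), rfl⟩

theorem entryIdeal_le_iff {M : Matrix m n R} {I : Ideal R} :
    entryIdeal M ≤ I ↔ ∀ i j, M i j ∈ I := by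
  rw [entryIdeal, Ideal.span_le, Set.range_subset_iff, Prod.forall]
  rfl

theorem entryIdeal_smul_upperNilpotent (c : R) :
    entryIdeal (c • !![0, -1; 0, 0]) = Ideal.span {c} := by
  refine le_antisymm (entryIdeal_le_iff.mpr fun i j => ?_) ?_
  · fin_cases i <;> fin_cases j <;> simp
  · rw [Ideal.span_singleton_le_iff_mem, ← neg_mem_iff]
    simpa using entry_mem_entryIdeal (c • !![(0 : R), -1; 0, 0]) 0 1

variable [Fintype m]

theorem entryIdeal_mul_le_left (A : Matrix l m R) (B : Matrix m n R) :
    entryIdeal (A * B) ≤ entryIdeal A :=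
  entryIdeal_le_iff.mpr fun i _ => Ideal.sum_mem _ fun k _ =>
    Ideal.mul_mem_right _ _ (entry_mem_entryIdeal A i k)

theorem entryIdeal_mul_le_right (A : Matrix l m R) (B : Matrix m n R) :
    entryIdeal (A * B) ≤ entryIdeal B :=
  entryIdeal_le_iff.mpr fun _ j => Ideal.sum_mem _ fun k _ =>
    Ideal.mul_mem_left _ _ (entry_mem_entryIdeal B k j)

theorem entryIdeal_mul_mul_le (A M B : Matrix m m R) : entryIdeal (A * M * B) ≤ entryIdeal M :=
  (entryIdeal_mul_le_left _ _).trans (entryIdeal_mul_le_right _ _)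

theorem entryIdeal_units_conj [DecidableEq m] (T : (Matrix m m R)ˣ) (M : Matrix m m R) :
    entryIdeal ((T : Matrix m m R) * M * ((T⁻¹ : (Matrix m m R)ˣ) : Matrix m m R)) =
      entryIdeal M := by
  refine le_antisymm (entryIdeal_mul_mul_le _ _ _) ?_
  calc entryIdeal M
      = entryIdeal (((T⁻¹ : (Matrix m m R)ˣ) : Matrix m m R) *
          ((T : Matrix m m R) * M * ((T⁻¹ : (Matrix m m R)ˣ) : Matrix m m R)) *
          (T : Matrix m m R)) := by simp [Matrix.mul_assoc]
    _ ≤ _ := entryIdeal_mul_mul_le _ _ _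

end Matrix

namespace Int

theorem exists_of_mul_self_add_mul_eq_zero_of_isCoprime {a b c : ℤ} (hbc : IsCoprime b c)
    (h : a * a + b * c = 0) :
    ∃ ε p r : ℤ, ε * ε = 1 ∧ IsCoprime p r ∧
      a = ε * (p * r) ∧ b = -(ε * (p * p)) ∧ c = ε * (r * r) := by
  by_cases hb : b = 0
  · subst hb
    have hc : IsUnit c := isCoprime_zero_left.mp hbc
    refine ⟨c, 0, 1, isUnit_mul_self hc, isCoprime_one_right, ?_, by simp, by simp⟩
    simpa using h
  obtain ⟨p, hp⟩ := sq_of_isCoprime hbc.neg_right (by linear_combination -h : b * -c = a ^ 2)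
  obtain ⟨ε, hε, rfl⟩ : ∃ ε : ℤ, ε * ε = 1 ∧ b = -(ε * (p * p)) := by
    rcases hp with hp | hp
    exacts [⟨-1, by norm_num, by rw [hp]; ring⟩, ⟨1, by norm_num, by rw [hp]; ring⟩]
  have hp0 : p ≠ 0 := by rintro rfl; simp at hb
  obtain ⟨s, rfl⟩ : p ∣ a :=
    (Int.pow_dvd_pow_iff two_ne_zero).mp ⟨ε * c, by linear_combination h⟩
  have hc : c = ε * ((ε * s) * (ε * s)) := by
    refine mul_left_cancel₀ (mul_ne_zero hp0 hp0) ?_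
    linear_combination (-ε) * h - (p * p * c + ε * p * p * s * s) * hε
  obtain ⟨u, v, huv⟩ := hbc
  refine ⟨ε, p, ε * s, hε, ⟨-(u * ε * p), v * ε * (ε * s), ?_⟩, ?_, rfl, hc⟩
  · rw [hc] at huv; linear_combination huv
  · linear_combination (-(p * s)) * hε

theorem exists_of_mul_self_add_mul_eq_zero {a b c : ℤ} (h : a * a + b * c = 0) :
    ∃ (l : ℕ) (ε p r : ℤ), ε * ε = 1 ∧ IsCoprime p r ∧
      a = l * (ε * (p * r)) ∧ b = -(l * (ε * (p * p))) ∧ c = l * (ε * (r * r)) := by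
  rcases Nat.eq_zero_or_pos (gcd b c) with hg | hg
  · obtain ⟨rfl, rfl⟩ := gcd_eq_zero_iff.mp hg
    refine ⟨0, 1, 0, 1, one_mul 1, isCoprime_one_right, ?_, by simp, by simp⟩
    simpa using h
  obtain ⟨g, b', c', hg0, hcop, rfl, rfl⟩ := exists_gcd_one' hg
  have hg0' : (g : ℤ) ≠ 0 := by exact_mod_cast hg0.ne'
  obtain ⟨a', rfl⟩ : (g : ℤ) ∣ a :=
    (Int.pow_dvd_pow_iff two_ne_zero).mp ⟨-(b' * c'), by linear_combination h⟩
  have h' : a' * a' + b' * c' = 0 := by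
    refine mul_left_cancel₀ (mul_ne_zero hg0' hg0') ?_
    linear_combination h
  obtain ⟨ε, p, r, hε, hpr, rfl, rfl, rfl⟩ :=
    exists_of_mul_self_add_mul_eq_zero_of_isCoprime (isCoprime_iff_gcd_eq_one.mpr hcop) h'
  exact ⟨g, ε, p, r, hε, hpr, by ring, by ring, by ring⟩

end Int

theorem stmt_8 :
    ({X : Matrix (Fin 2) (Fin 2) ℤ | X * X = 0} =
      ⋃ lam : ℕ,
        {X : Matrix (Fin 2) (Fin 2) ℤ | ∃ T : GL (Fin 2) ℤ,
          X = (T : Matrix (Fin 2) (Fin 2) ℤ) * ((lam : ℤ) • !![0, -1; 0, 0]) *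
              ((T⁻¹ : GL (Fin 2) ℤ) : Matrix (Fin 2) (Fin 2) ℤ)}) ∧
    ∀ lam mu : ℕ, lam ≠ mu →
      Disjoint
        {X : Matrix (Fin 2) (Fin 2) ℤ | ∃ T : GL (Fin 2) ℤ,
          X = (T : Matrix (Fin 2) (Fin 2) ℤ) * ((lam : ℤ) • !![0, -1; 0, 0]) *
              ((T⁻¹ : GL (Fin 2) ℤ) : Matrix (Fin 2) (Fin 2) ℤ)}
        {X : Matrix (Fin 2) (Fin 2) ℤ | ∃ T : GL (Fin 2) ℤ,
          X = (T : Matrix (Fin 2) (Fin 2) ℤ) * ((mu : ℤ) • !![0, -1; 0, 0]) *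
              ((T⁻¹ : GL (Fin 2) ℤ) : Matrix (Fin 2) (Fin 2) ℤ)} := by
  constructor
  · ext X
    simp only [Set.mem_ofPred_eq, Set.mem_iUnion]
    constructor
    · intro hX
      obtain ⟨a, b, c, rfl, habc⟩ := Matrix.exists_eq_fin_two_of_mul_self_eq_zero hX
      obtain ⟨l, ε, p, r, hε, hpr, rfl, rfl, rfl⟩ := Int.exists_of_mul_self_add_mul_eq_zero habc
      exact ⟨l, Matrix.exists_conj_smul_upperNilpotent_eq _ ε p r hε hpr⟩
    · rintro ⟨l, T, rfl⟩
      rw [← sq, Units.conj_pow, Matrix.smul_upperNilpotent_sq, mul_zero, zero_mul]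
  · intro lam mu hne
    refine Set.disjoint_left.mpr fun X ⟨T, hT⟩ ⟨S, hS⟩ => hne ?_
    have h := congrArg Matrix.entryIdeal (hT.symm.trans hS)
    rw [Matrix.entryIdeal_units_conj, Matrix.entryIdeal_units_conj,
      Matrix.entryIdeal_smul_upperNilpotent, Matrix.entryIdeal_smul_upperNilpotent,
      Ideal.span_singleton_eq_span_singleton, ← Int.natAbs_eq_iff_associated] at h
    simpa using h
end

section
/- The subgroup of SL₂(ℤ) generated by U² = [[1,2],[0,1]] and L² = [[1,0],[2,1]] together with -I consists exactly of the matrices in SL₂(ℤ) congruent to ±I modulo 2. -/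
/-!
Everything in the closure reduces to `±I` mod 2, since `U²`, `L²` and `-I` do. Conversely, a matrix
`[[a, b], [c, d]] ≡ I (mod 2)` has `a` odd and `c` even, so left multiplication by a power of `U²`
replaces `a` by a representative of `a mod 2c` of absolute value `< |c|`, and then a power of `L²`
replaces `c` by one of absolute value `< |a|`. This Euclidean descent ends at `c = 0`, where the
matrix is `±U^(2m)`.
-/

def U2 : Matrix.SpecialLinearGroup (Fin 2) ℤ :=
  ⟨!![1, 2; 0, 1], by simp [Matrix.det_fin_two_of]⟩

def L2 : Matrix.SpecialLinearGroup (Fin 2) ℤ :=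
  ⟨!![1, 0; 2, 1], by simp [Matrix.det_fin_two_of]⟩

theorem Int.exists_natAbs_add_two_mul_mul_lt (x y : ℤ) (hy : y ≠ 0) (hxy : Odd (x + y)) :
    ∃ k : ℤ, (x + 2 * k * y).natAbs < y.natAbs := by
  suffices h : ∀ y : ℤ, 0 < y → Odd (x + y) → ∃ k : ℤ, (x + 2 * k * y).natAbs < y.natAbs by
    rcases hy.lt_or_gt with hneg | hpos
    · obtain ⟨k, hk⟩ := h (-y) (by omega) (by simpa [Int.odd_add] using hxy)
      exact ⟨-k, by simpa using hk⟩
    · exact h y hpos hxy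
  intro y hy ⟨m, hm⟩
  have hdiv := Int.emod_add_mul_ediv (x + y) (2 * y)
  have hlo := Int.emod_nonneg (x + y) (by omega : 2 * y ≠ 0)
  have hhi := Int.emod_lt_of_pos (x + y) (by omega : 0 < 2 * y)
  -- `x - 2qy = r - y ∈ [-y, y)` with `r = (x + y) mod 2y`, and `r ≠ 0` because `x + y` is odd
  refine ⟨-((x + y) / (2 * y)), ?_⟩
  generalize (x + y) / (2 * y) = q at hdiv ⊢
  generalize (x + y) % (2 * y) = r at *
  have hr : r = 2 * (m - y * q) + 1 := by linear_combination hdiv + hm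
  have : x + 2 * -q * y = r - y := by linear_combination -hdiv
  omega

open MatrixGroups ModularGroup CongruenceSubgroup

namespace CongruenceSubgroup

theorem mem_Gamma_iff_map_eq_one {N : ℕ} {A : SL(2, ℤ)} :
    A ∈ Γ(N) ↔ (A : Matrix (Fin 2) (Fin 2) ℤ).map (Int.cast : ℤ → ZMod N) = 1 :=
  Gamma_mem'.trans Subtype.ext_iff

theorem mem_Gamma_two_iff {A : SL(2, ℤ)} :
    A ∈ Γ(2) ↔ Odd (A 0 0) ∧ Even (A 0 1) ∧ Even (A 1 0) ∧ Odd (A 1 1) := by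
  simp only [Gamma_mem, ZMod.intCast_eq_one_iff_odd, ZMod.intCast_eq_zero_iff_even]

end CongruenceSubgroup

theorem U2_eq_T_zpow_two : U2 = T ^ (2 : ℤ) := by decide

theorem L2_eq_S_mul_T_zpow_mul_S_inv : L2 = S * T ^ (-2 : ℤ) * S⁻¹ := by decide

theorem coe_U2_zpow (k : ℤ) :
    ((U2 ^ k : SL(2, ℤ)) : Matrix (Fin 2) (Fin 2) ℤ) = !![1, 2 * k; 0, 1] := by
  rw [U2_eq_T_zpow_two, ← _root_.zpow_mul, coe_T_zpow]

theorem coe_L2_zpow (k : ℤ) :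
    ((L2 ^ k : SL(2, ℤ)) : Matrix (Fin 2) (Fin 2) ℤ) = !![1, 0; 2 * k, 1] := by
  rw [L2_eq_S_mul_T_zpow_mul_S_inv, conj_zpow, ← _root_.zpow_mul, S_inv]
  simp [coe_T_zpow]

theorem U2_zpow_mul_apply_zero_zero (k : ℤ) (A : SL(2, ℤ)) :
    (U2 ^ k * A) 0 0 = A 0 0 + 2 * k * A 1 0 := by
  simp [coe_U2_zpow, Matrix.mul_apply, Fin.sum_univ_two]

theorem U2_zpow_mul_apply_one_zero (k : ℤ) (A : SL(2, ℤ)) : (U2 ^ k * A) 1 0 = A 1 0 := by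
  simp [coe_U2_zpow, Matrix.mul_apply, Fin.sum_univ_two]

theorem L2_zpow_mul_apply_one_zero (k : ℤ) (A : SL(2, ℤ)) :
    (L2 ^ k * A) 1 0 = A 1 0 + 2 * k * A 0 0 := by
  simp [coe_L2_zpow, Matrix.mul_apply, Fin.sum_univ_two, add_comm]

theorem U2_mem_Gamma_two : U2 ∈ Γ(2) := by
  rw [Gamma_mem]; decide

theorem L2_mem_Gamma_two : L2 ∈ Γ(2) := by
  rw [Gamma_mem]; decide

theorem neg_one_mem_Gamma_two : (-1 : SL(2, ℤ)) ∈ Γ(2) := by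
  rw [Gamma_mem]; decide

theorem exists_eq_U2_zpow_or_eq_neg_of_mem_Gamma_two {A : SL(2, ℤ)} (hA : A ∈ Γ(2))
    (hc : A 1 0 = 0) : ∃ m : ℤ, A = U2 ^ m ∨ A = -U2 ^ m := by
  obtain ⟨-, ⟨m, hm⟩, -, -⟩ := mem_Gamma_two_iff.mp hA
  have had : A 0 0 * A 1 1 = 1 := by
    have hdet := A.det_coe
    rwa [Matrix.det_fin_two, hc, mul_zero, sub_zero] at hdet
  rcases Int.eq_one_or_neg_one_of_mul_eq_one' had with ⟨ha, hd⟩ | ⟨ha, hd⟩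
  · refine ⟨m, Or.inl ?_⟩
    ext i j
    fin_cases i <;> fin_cases j <;> simp [coe_U2_zpow, ha, hd, hc, hm, two_mul]
  · refine ⟨-m, Or.inr ?_⟩
    ext i j
    fin_cases i <;> fin_cases j <;> simp [coe_U2_zpow, ha, hd, hc, hm, two_mul]

theorem exists_natAbs_L2_zpow_mul_U2_zpow_mul_apply_one_zero_lt {A : SL(2, ℤ)} (hA : A ∈ Γ(2))
    (hc : A 1 0 ≠ 0) : ∃ k l : ℤ, ((L2 ^ l * (U2 ^ k * A)) 1 0).natAbs < (A 1 0).natAbs := by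
  obtain ⟨ha, -, hc2, -⟩ := mem_Gamma_two_iff.mp hA
  obtain ⟨k, hk⟩ := Int.exists_natAbs_add_two_mul_mul_lt _ _ hc (ha.add_even hc2)
  set B := U2 ^ k * A
  have hB00 : B 0 0 = A 0 0 + 2 * k * A 1 0 := U2_zpow_mul_apply_zero_zero k A
  have hB10 : B 1 0 = A 1 0 := U2_zpow_mul_apply_one_zero k A
  have hB : B ∈ Γ(2) := mul_mem (zpow_mem U2_mem_Gamma_two k) hA
  obtain ⟨hb, -, -, -⟩ := mem_Gamma_two_iff.mp hB
  obtain ⟨l, hl⟩ := Int.exists_natAbs_add_two_mul_mul_lt (B 1 0) (B 0 0)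
    (fun h ↦ by simp [h] at hb) (hB10 ▸ hc2.add_odd hb)
  refine ⟨k, l, ?_⟩
  calc ((L2 ^ l * B) 1 0).natAbs < (B 0 0).natAbs := by rwa [L2_zpow_mul_apply_one_zero]
    _ < (A 1 0).natAbs := hB00 ▸ hk

theorem mem_closure_of_mem_Gamma_two {A : SL(2, ℤ)} (hA : A ∈ Γ(2)) :
    A ∈ Subgroup.closure {U2, L2, -1} := by
  set G := Subgroup.closure ({U2, L2, -1} : Set SL(2, ℤ))
  have hU : U2 ∈ G := Subgroup.subset_closure (by simp)
  have hL : L2 ∈ G := Subgroup.subset_closure (by simp)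
  have hneg : (-1 : SL(2, ℤ)) ∈ G := Subgroup.subset_closure (by simp)
  induction h : (A 1 0).natAbs using Nat.strong_induction_on generalizing A with
  | _ n ih =>
    by_cases hc : A 1 0 = 0
    · obtain ⟨m, rfl | rfl⟩ := exists_eq_U2_zpow_or_eq_neg_of_mem_Gamma_two hA hc
      · exact zpow_mem hU m
      · simpa using mul_mem hneg (zpow_mem hU m)
    · obtain ⟨k, l, hlt⟩ := exists_natAbs_L2_zpow_mul_U2_zpow_mul_apply_one_zero_lt hA hc
      have hC := ih _ (h ▸ hlt) (mul_mem (zpow_mem L2_mem_Gamma_two l)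
        (mul_mem (zpow_mem U2_mem_Gamma_two k) hA)) rfl
      rwa [Subgroup.mul_mem_cancel_left _ (zpow_mem hL l),
        Subgroup.mul_mem_cancel_left _ (zpow_mem hU k)] at hC

theorem closure_U2_L2_neg_one_eq_Gamma_two : Subgroup.closure {U2, L2, -1} = Γ(2) := by
  refine le_antisymm ((Subgroup.closure_le _).mpr ?_) fun A hA ↦ mem_closure_of_mem_Gamma_two hA
  rintro _ (rfl | rfl | rfl)
  exacts [U2_mem_Gamma_two, L2_mem_Gamma_two, neg_one_mem_Gamma_two]

theorem stmt_12 (A : Matrix.SpecialLinearGroup (Fin 2) ℤ) :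
    A ∈ Subgroup.closure {U2, L2, (-1 : Matrix.SpecialLinearGroup (Fin 2) ℤ)} ↔
      ((A : Matrix (Fin 2) (Fin 2) ℤ).map (Int.cast : ℤ → ZMod 2) = (1 : Matrix (Fin 2) (Fin 2) (ZMod 2)) ∨
       (A : Matrix (Fin 2) (Fin 2) ℤ).map (Int.cast : ℤ → ZMod 2) = (-1 : Matrix (Fin 2) (Fin 2) (ZMod 2))) := by
  have hneg_one : (-1 : Matrix (Fin 2) (Fin 2) (ZMod 2)) = 1 := by decide
  rw [closure_U2_L2_neg_one_eq_Gamma_two, mem_Gamma_iff_map_eq_one, hneg_one, or_self]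
end

section
/- Any nonempty alternating word in nonzero powers of U² and L² (i.e., U^{±2n_k} L^{±2m_k} ⋯ with all exponents nonzero) is a nontrivial element of PSL₂(ℤ). -/
def PSL2Z : Type :=
  Matrix.SpecialLinearGroup (Fin 2) ℤ ⧸ Subgroup.center (Matrix.SpecialLinearGroup (Fin 2) ℤ)

noncomputable instance : Group PSL2Z := QuotientGroup.Quotient.group _

/-- The image of U = [[1,1],[0,1]] in PSL₂(ℤ). -/
noncomputable def uP : PSL2Z :=
  QuotientGroup.mk (⟨!![1, 1; 0, 1], by simp [Matrix.det_fin_two_of]⟩ :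
    Matrix.SpecialLinearGroup (Fin 2) ℤ)

/-- The image of L = [[1,0],[1,1]] in PSL₂(ℤ). -/
noncomputable def lP : PSL2Z :=
  QuotientGroup.mk (⟨!![1, 0; 1, 1], by simp [Matrix.det_fin_two_of]⟩ :
    Matrix.SpecialLinearGroup (Fin 2) ℤ)

/-!
Ping-pong on `ℤ²`. For `|k| ≥ 2`, `U^k (x, y) = (x + k y, y)` sends a vector with `|x| < |y|`
to one with `|y| < |x + k y|`, and `L^k` does the same with the coordinates exchanged. Along an
alternating word the smaller coordinate therefore grows at every letter; starting from a unit
vector adapted to the last letter, the image has a coordinate of absolute value at least `2`.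
A central element of `SL₂(ℤ)` is `±1` and cannot do that.
-/
namespace PingPong

open Matrix Matrix.SpecialLinearGroup ModularGroup
open scoped MatrixGroups

lemma abs_lt_abs_add_mul {x y k : ℤ} (hxy : |x| < |y|) (hk : 2 ≤ |k|) : |y| < |x + k * y| :=
  calc |y| < 2 * |y| - |x| := by linarith
    _ ≤ |k| * |y| - |x| := by nlinarith [abs_nonneg y]
    _ = |k * y| - |-x| := by rw [abs_mul, abs_neg]
    _ ≤ |k * y - -x| := abs_sub_abs_le_abs_sub _ _
    _ = |x + k * y| := by ring_nf

lemma abs_mulVec_of_mem_center {ι : Type*} [Fintype ι] [DecidableEq ι]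
    {A : SpecialLinearGroup ι ℤ} (hA : A ∈ Subgroup.center (SpecialLinearGroup ι ℤ))
    (v : ι → ℤ) (i : ι) : |(A *ᵥ v) i| = |v i| := by
  obtain ⟨r, hr, hrA⟩ := mem_center_iff.mp hA
  have : Nonempty ι := ⟨i⟩
  have hr : |r| = 1 := (pow_eq_one_iff_of_nonneg (abs_nonneg r) Fintype.card_ne_zero).mp
    (by rw [← abs_pow, hr, abs_one])
  rw [← hrA, scalar_apply, mulVec_diagonal, abs_mul, hr, one_mul]

def L : SL(2, ℤ) := ⟨!![1, 0; 1, 1], by simp [det_fin_two_of]⟩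

lemma L_eq_conj_T_inv : L = S * T⁻¹ * S⁻¹ := by
  ext i j; fin_cases i <;> fin_cases j <;> simp [L, coe_S, adjugate_fin_two]

lemma coe_L_zpow (n : ℤ) : ((L ^ n : SL(2, ℤ)) : Matrix (Fin 2) (Fin 2) ℤ) = !![1, 0; n, 1] := by
  rw [L_eq_conj_T_inv, conj_zpow, _root_.inv_zpow']
  ext i j; fin_cases i <;> fin_cases j <;> simp [coe_S, coe_T_zpow, adjugate_fin_two]

def letter (p : Bool × ℤ) : SL(2, ℤ) := (if p.1 then T else L) ^ p.2

lemma letter_true_mulVec (k : ℤ) (v : Fin 2 → ℤ) :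
    letter (true, k) *ᵥ v = ![v 0 + k * v 1, v 1] := by
  ext i; fin_cases i <;> simp [letter, coe_T_zpow, mulVec, dotProduct]

lemma letter_false_mulVec (k : ℤ) (v : Fin 2 → ℤ) :
    letter (false, k) *ᵥ v = ![v 0, v 1 + k * v 0] := by
  ext i; fin_cases i <;> simp [letter, coe_L_zpow, mulVec, dotProduct, add_comm]

/-- `Dominant true` is the ping-pong region of `U` (first coordinate dominant), `Dominant false`
that of `L`; `n` is a lower bound for the absolute value of the smaller coordinate. -/
def Dominant : Bool → ℤ → (Fin 2 → ℤ) → Prop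
  | true, n, v => n ≤ |v 1| ∧ |v 1| < |v 0|
  | false, n, v => n ≤ |v 0| ∧ |v 0| < |v 1|

lemma Dominant.letter_mulVec {b : Bool} {k n : ℤ} {v : Fin 2 → ℤ} (hk : 2 ≤ |k|)
    (hv : Dominant (!b) n v) : Dominant b (n + 1) (letter (b, k) *ᵥ v) := by
  cases b <;>
  · obtain ⟨hn, hlt⟩ := hv
    have := abs_lt_abs_add_mul hlt hk
    simp only [Dominant, letter_true_mulVec, letter_false_mulVec, cons_val_zero, cons_val_one]
    constructor <;> linarith

theorem Dominant.prod_letter_mulVec {w : List (Bool × ℤ)} (hw : w ≠ [])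
    (hk : ∀ p ∈ w, 2 ≤ |p.2|) (halt : w.IsChain (fun p q => p.1 ≠ q.1)) {n : ℤ}
    {v : Fin 2 → ℤ} (hv : Dominant (!(w.getLast hw).1) n v) :
    Dominant (w.head hw).1 (n + w.length) ((w.map letter).prod *ᵥ v) := by
  induction w with
  | nil => exact absurd rfl hw
  | cons a w ih =>
    rw [List.map_cons, List.prod_cons, coe_mul, ← mulVec_mulVec, List.length_cons,
      Nat.cast_succ, ← add_assoc]
    rcases w with _ | ⟨b, w⟩
    · simpa using hv.letter_mulVec (hk a (by simp))
    · obtain ⟨hab, halt⟩ := List.isChain_cons_cons.mp halt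
      have hb : b.1 = !a.1 := Bool.eq_not.mpr hab.symm
      have := ih (List.cons_ne_nil b w) (fun p hp => hk p (by simp [hp])) halt hv
      rw [List.head_cons, hb] at this
      exact this.letter_mulVec (hk a (by simp))

lemma exists_dominant_abs_le_one (b : Bool) : ∃ v, Dominant b 0 v ∧ ∀ i, |v i| ≤ 1 := by
  cases b
  · exact ⟨![0, 1], by simp [Dominant], fun i => by fin_cases i <;> simp⟩
  · exact ⟨![1, 0], by simp [Dominant], fun i => by fin_cases i <;> simp⟩

lemma Dominant.exists_one_lt_abs {b : Bool} {n : ℤ} {v : Fin 2 → ℤ} (hn : 1 ≤ n)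
    (h : Dominant b n v) : ∃ i, 1 < |v i| := by
  cases b
  · exact ⟨1, by obtain ⟨h1, h2⟩ := h; linarith⟩
  · exact ⟨0, by obtain ⟨h1, h2⟩ := h; linarith⟩

theorem prod_map_letter_notMem_center {w : List (Bool × ℤ)} (hw : w ≠ [])
    (hk : ∀ p ∈ w, 2 ≤ |p.2|) (halt : w.IsChain (fun p q => p.1 ≠ q.1)) :
    (w.map letter).prod ∉ Subgroup.center SL(2, ℤ) := by
  intro hcenter
  obtain ⟨v, hv, hv_le⟩ := exists_dominant_abs_le_one (!(w.getLast hw).1)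
  obtain ⟨i, hi⟩ := (Dominant.prod_letter_mulVec hw hk halt hv).exists_one_lt_abs
    (by have := List.length_pos_of_ne_nil hw; omega)
  linarith [abs_mulVec_of_mem_center hcenter v i, hv_le i]

def toPSL : SL(2, ℤ) →* PSL2Z := QuotientGroup.mk' _

lemma toPSL_letter (p : Bool × ℤ) : toPSL (letter p) = (if p.1 then uP else lP) ^ p.2 := by
  rcases p with ⟨_ | _, k⟩
  · exact map_zpow toPSL L k
  · exact map_zpow toPSL T k

end PingPong

open PingPong in
/-- Any nonempty alternating word in nonzero powers of U² and L² is nontrivial in PSL₂(ℤ).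
A letter `(b, e)` with `e ≠ 0` stands for `U^(2e)` if `b = true` and `L^(2e)` if `b = false`;
alternation means consecutive letters use different generators. -/
theorem stmt_15 (w : List (Bool × ℤ)) (hne : w ≠ [])
    (hz : ∀ p ∈ w, p.2 ≠ 0)
    (halt : List.Chain' (fun p q => p.1 ≠ q.1) w) :
    (w.map (fun p => (if p.1 then uP else lP) ^ (2 * p.2))).prod ≠ 1 := by
  set w' := w.map fun p => (p.1, 2 * p.2)
  have hk : ∀ p ∈ w', 2 ≤ |p.2| := by
    simp only [w', List.forall_mem_map]
    intro p hp
    rw [abs_mul, abs_two]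
    linarith [Int.one_le_abs (hz p hp)]
  have hprod : (w.map (fun p => (if p.1 then uP else lP) ^ (2 * p.2))).prod =
      toPSL (w'.map letter).prod := by
    rw [map_list_prod, List.map_map, List.map_map]
    exact congrArg List.prod (List.map_congr_left fun p _ => (toPSL_letter (p.1, 2 * p.2)).symm)
  rw [hprod]
  exact fun h => prod_map_letter_notMem_center (by simpa [w'] using hne) hk
    (List.isChain_map _ |>.mpr halt) ((QuotientGroup.eq_one_iff _).mp h)
end

section
/- The stabilizer of E = [[0,-1],[0,0]] under the conjugation action of GL₂(ℤ) is the subgroup generated by U = [[1,1],[0,1]] and -I. -/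
/-!
A matrix commutes with `E = !![0, -1; 0, 0]` exactly when it is upper triangular with equal
diagonal entries. For `T ∈ GL₂(ℤ)` the square of this common entry is the unit `det T`, so it
is `±1` and `T = ±Uᵇ` with `b = T 0 1`. Conversely `U` and `-1` commute with `E`, hence so
does the whole subgroup they generate.
-/

/-- U = [[1,1],[0,1]] as an element of GL₂(ℤ). -/
def Ugl : GL (Fin 2) ℤ :=
  ⟨!![1, 1; 0, 1], !![1, -1; 0, 1],
    by ext i j; fin_cases i <;> fin_cases j <;>
      simp [Matrix.mul_apply, Fin.sum_univ_succ],
    by ext i j; fin_cases i <;> fin_cases j <;>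
      simp [Matrix.mul_apply, Fin.sum_univ_succ]⟩

theorem Units.conj_eq_iff_commute {M : Type*} [Monoid M] (u : Mˣ) (a : M) :
    (u : M) * a * ↑u⁻¹ = a ↔ Commute (u : M) a :=
  Units.mul_inv_eq_iff_eq_mul u

theorem Matrix.commute_fin_two_nilpotent_iff {R : Type*} [Ring R]
    (A : Matrix (Fin 2) (Fin 2) R) :
    Commute A !![0, -1; 0, 0] ↔ A 1 0 = 0 ∧ A 0 0 = A 1 1 := by
  simp only [Commute, SemiconjBy, ← Matrix.ext_iff, Fin.forall_fin_two, Matrix.mul_apply,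
    Fin.sum_univ_two]
  simp only [Fin.isValue, of_apply, cons_val', cons_val_zero, cons_val_fin_one, mul_zero,
    cons_val_one, add_zero, zero_mul, neg_mul, one_mul, zero_add, zero_eq_neg, mul_neg, mul_one,
    neg_inj, neg_eq_zero, true_and, and_iff_left_iff_imp, and_imp]
  tauto

theorem Matrix.GeneralLinearGroup.isUnit_apply_zero_zero_of_apply_one_zero_eq_zero
    {R : Type*} [CommRing R] (T : GL (Fin 2) R) (h : (T : Matrix (Fin 2) (Fin 2) R) 1 0 = 0) :
    IsUnit ((T : Matrix (Fin 2) (Fin 2) R) 0 0) := by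
  have hdet := (Matrix.isUnit_iff_isUnit_det _).mp T.isUnit
  rw [Matrix.det_fin_two, h, mul_zero, sub_zero] at hdet
  exact isUnit_of_mul_isUnit_left hdet

theorem Ugl_zpow (n : ℤ) :
    ((Ugl ^ n : GL (Fin 2) ℤ) : Matrix (Fin 2) (Fin 2) ℤ) = !![1, n; 0, 1] := by
  have hU : ((Ugl : GL (Fin 2) ℤ) : Matrix (Fin 2) (Fin 2) ℤ) = !![1, 1; 0, 1] := rfl
  have hU' : ((Ugl⁻¹ : GL (Fin 2) ℤ) : Matrix (Fin 2) (Fin 2) ℤ) = !![1, -1; 0, 1] := rfl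
  induction n using Int.induction_on with
  | zero => exact Matrix.one_fin_two
  | succ k ih =>
    rw [zpow_add_one, Units.val_mul, ih, hU, Matrix.mul_fin_two]
    simp [add_comm]
  | pred k ih =>
    rw [zpow_sub_one, Units.val_mul, ih, hU', Matrix.mul_fin_two]
    simp [add_comm, sub_eq_add_neg]

theorem eq_Ugl_zpow_of_unipotent (T : GL (Fin 2) ℤ)
    (h10 : (T : Matrix (Fin 2) (Fin 2) ℤ) 1 0 = 0)
    (h00 : (T : Matrix (Fin 2) (Fin 2) ℤ) 0 0 = 1)
    (h11 : (T : Matrix (Fin 2) (Fin 2) ℤ) 1 1 = 1) :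
    T = Ugl ^ (T : Matrix (Fin 2) (Fin 2) ℤ) 0 1 := by
  ext i j
  rw [Ugl_zpow]
  fin_cases i <;> fin_cases j <;> simp [h00, h10, h11]

theorem commute_Ugl : Commute (Ugl : Matrix (Fin 2) (Fin 2) ℤ) !![0, -1; 0, 0] :=
  (Matrix.commute_fin_two_nilpotent_iff _).mpr ⟨rfl, rfl⟩

theorem commute_of_mem_closure {T : GL (Fin 2) ℤ}
    (hT : T ∈ Subgroup.closure {Ugl, (-1 : GL (Fin 2) ℤ)}) :
    Commute (T : Matrix (Fin 2) (Fin 2) ℤ) !![0, -1; 0, 0] := by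
  induction hT using Subgroup.closure_induction with
  | mem x hx =>
    rcases hx with rfl | rfl
    · exact commute_Ugl
    · exact Commute.neg_one_left _
  | one => exact Commute.one_left _
  | mul _ _ _ _ ha hb => exact ha.mul_left hb
  | inv _ _ h => exact h.units_inv_left

theorem mem_closure_of_commute {T : GL (Fin 2) ℤ}
    (hT : Commute (T : Matrix (Fin 2) (Fin 2) ℤ) !![0, -1; 0, 0]) :
    T ∈ Subgroup.closure {Ugl, (-1 : GL (Fin 2) ℤ)} := by
  obtain ⟨h10, h00⟩ := (Matrix.commute_fin_two_nilpotent_iff _).mp hT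
  have hU : Ugl ∈ Subgroup.closure {Ugl, (-1 : GL (Fin 2) ℤ)} :=
    Subgroup.subset_closure (Set.mem_insert _ _)
  have hN : (-1 : GL (Fin 2) ℤ) ∈ Subgroup.closure {Ugl, (-1 : GL (Fin 2) ℤ)} :=
    Subgroup.subset_closure (Set.mem_insert_of_mem _ rfl)
  rcases Int.isUnit_iff.mp
    (Matrix.GeneralLinearGroup.isUnit_apply_zero_zero_of_apply_one_zero_eq_zero T h10) with h | h
  · rw [eq_Ugl_zpow_of_unipotent T h10 h (h00 ▸ h)]
    exact Subgroup.zpow_mem _ hU _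
  · rw [← neg_neg T,
      eq_Ugl_zpow_of_unipotent (-T) (by simp [h10]) (by simp [h]) (by simp [← h00, h]),
      ← neg_one_mul (Ugl ^ _)]
    exact Subgroup.mul_mem _ hN (Subgroup.zpow_mem _ hU _)

theorem stmt_16 (T : GL (Fin 2) ℤ) :
    (T : Matrix (Fin 2) (Fin 2) ℤ) * !![0, -1; 0, 0] *
        ((T⁻¹ : GL (Fin 2) ℤ) : Matrix (Fin 2) (Fin 2) ℤ) = !![0, -1; 0, 0] ↔
      T ∈ Subgroup.closure {Ugl, (-1 : GL (Fin 2) ℤ)} := by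
  rw [Units.conj_eq_iff_commute]
  exact ⟨mem_closure_of_commute, commute_of_mem_closure⟩
end

section
/- If (S, C, N) is a primitive Pythagorean triple with S, C, N > 0, then each of the three transformations L₊, U₋, U₊, where L₊(S,C,N) = (S,-C,N)+2(N-S+C)(1,1,1), U₋(S,C,N) = (-S,C,N)+2(N+S-C)(1,1,1), U₊(S,C,N) = (-S,-C,N)+2(N+S+C)(1,1,1), yields a primitive Pythagorean triple with all coordinates positive and with second coordinate strictly larger than C. -/
/-- `(x, y, z)` is a primitive Pythagorean triple of positive integers whose second
coordinate exceeds `C`. -/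
def GoodTriple (C x y z : ℤ) : Prop :=
  0 < x ∧ 0 < y ∧ 0 < z ∧ x ^ 2 + y ^ 2 = z ^ 2 ∧
    Int.gcd (Int.gcd x y) z = 1 ∧ C < y

lemma aux_gcd (S C N x y z : ℤ)
    (h1 : (Int.gcd (Int.gcd x y) z : ℤ) ∣ S)
    (h2 : (Int.gcd (Int.gcd x y) z : ℤ) ∣ C)
    (h3 : (Int.gcd (Int.gcd x y) z : ℤ) ∣ N)
    (hprim : Int.gcd (Int.gcd S C) N = 1) :
    Int.gcd (Int.gcd x y) z = 1 := by
  have h : (Int.gcd (Int.gcd x y) z : ℤ) ∣ (Int.gcd (Int.gcd S C) N : ℤ) :=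
    Int.natCast_dvd_natCast.mpr (Int.dvd_gcd (Int.natCast_dvd_natCast.mpr (Int.dvd_gcd h1 h2)) h3)
  rw [hprim] at h
  exact Nat.dvd_one.mp (by exact_mod_cast h)

theorem stmt_18 (S C N : ℤ) (hpyth : S ^ 2 + C ^ 2 = N ^ 2)
    (hprim : Int.gcd (Int.gcd S C) N = 1)
    (hS : 0 < S) (hC : 0 < C) (hN : 0 < N) :
    GoodTriple C (S + 2 * (N - S + C)) (-C + 2 * (N - S + C)) (N + 2 * (N - S + C)) ∧
    GoodTriple C (-S + 2 * (N + S - C)) (C + 2 * (N + S - C)) (N + 2 * (N + S - C)) ∧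
    GoodTriple C (-S + 2 * (N + S + C)) (-C + 2 * (N + S + C)) (N + 2 * (N + S + C)) := by
  have hNS : S < N := by nlinarith
  have hNC : C < N := by nlinarith
  refine ⟨⟨by linarith, by linarith, by linarith, by linear_combination hpyth, ?_, by linarith⟩,
    ⟨by linarith, by linarith, by linarith, by linear_combination hpyth, ?_, by linarith⟩,
    ⟨by linarith, by linarith, by linarith, by linear_combination hpyth, ?_, by linarith⟩⟩
  · set x := S + 2 * (N - S + C)
    set y := -C + 2 * (N - S + C)
    set z := N + 2 * (N - S + C)
    have dx : (Int.gcd (Int.gcd x y) z : ℤ) ∣ x := dvd_trans (Int.gcd_dvd_left _ _) (Int.gcd_dvd_left _ _)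
    have dy : (Int.gcd (Int.gcd x y) z : ℤ) ∣ y := dvd_trans (Int.gcd_dvd_left _ _) (Int.gcd_dvd_right _ _)
    have dz : (Int.gcd (Int.gcd x y) z : ℤ) ∣ z := (Int.gcd_dvd_right _ _)
    refine aux_gcd S C N x y z ?_ ?_ ?_ hprim
    · have : S = -x - 2*y + 2*z := by simp only [x, y, z]; ring
      rw [this]; exact dvd_add (dvd_sub (dvd_neg.mpr dx) (dy.mul_left 2)) (dz.mul_left 2)
    · have : C = 2*x + y - 2*z := by simp only [x, y, z]; ring
      rw [this]; exact dvd_sub (dvd_add (dx.mul_left 2) dy) (dz.mul_left 2)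
    · have : N = -2*x - 2*y + 3*z := by simp only [x, y, z]; ring
      rw [this]; exact dvd_add (dvd_sub (dx.mul_left (-2)) (dy.mul_left 2)) (dz.mul_left 3)
  · set x := -S + 2 * (N + S - C)
    set y := C + 2 * (N + S - C)
    set z := N + 2 * (N + S - C)
    have dx : (Int.gcd (Int.gcd x y) z : ℤ) ∣ x := dvd_trans (Int.gcd_dvd_left _ _) (Int.gcd_dvd_left _ _)
    have dy : (Int.gcd (Int.gcd x y) z : ℤ) ∣ y := dvd_trans (Int.gcd_dvd_left _ _) (Int.gcd_dvd_right _ _)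
    have dz : (Int.gcd (Int.gcd x y) z : ℤ) ∣ z := (Int.gcd_dvd_right _ _)
    refine aux_gcd S C N x y z ?_ ?_ ?_ hprim
    · have : S = x + 2*y - 2*z := by simp only [x, y, z]; ring
      rw [this]; exact dvd_sub (dvd_add dx (dy.mul_left 2)) (dz.mul_left 2)
    · have : C = -2*x - y + 2*z := by simp only [x, y, z]; ring
      rw [this]; exact dvd_add (dvd_sub (dx.mul_left (-2)) dy) (dz.mul_left 2)
    · have : N = -2*x - 2*y + 3*z := by simp only [x, y, z]; ring
      rw [this]; exact dvd_add (dvd_sub (dx.mul_left (-2)) (dy.mul_left 2)) (dz.mul_left 3)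
  · set x := -S + 2 * (N + S + C)
    set y := -C + 2 * (N + S + C)
    set z := N + 2 * (N + S + C)
    have dx : (Int.gcd (Int.gcd x y) z : ℤ) ∣ x := dvd_trans (Int.gcd_dvd_left _ _) (Int.gcd_dvd_left _ _)
    have dy : (Int.gcd (Int.gcd x y) z : ℤ) ∣ y := dvd_trans (Int.gcd_dvd_left _ _) (Int.gcd_dvd_right _ _)
    have dz : (Int.gcd (Int.gcd x y) z : ℤ) ∣ z := (Int.gcd_dvd_right _ _)
    refine aux_gcd S C N x y z ?_ ?_ ?_ hprim
    · have : S = x + 2*y - 2*z := by simp only [x, y, z]; ring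
      rw [this]; exact dvd_sub (dvd_add dx (dy.mul_left 2)) (dz.mul_left 2)
    · have : C = 2*x + y - 2*z := by simp only [x, y, z]; ring
      rw [this]; exact dvd_sub (dvd_add (dx.mul_left 2) dy) (dz.mul_left 2)
    · have : N = -2*x - 2*y + 3*z := by simp only [x, y, z]; ring
      rw [this]; exact dvd_add (dvd_sub (dx.mul_left (-2)) (dy.mul_left 2)) (dz.mul_left 3)
end
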